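/- Let P be a finite set of pairs of points in the Euclidean plane, let l = (s_l, t_l) ∈ P be a regular pair, and let p and q be vertices of the Hanan grid H(P) lying in the bounding box B(l) with p ≤ q. Then the maximum, over all Manhattan paths π_l ∈ Π_P(l) and π_v ∈ Π_P(p,q), of the length ‖π_l ∩ π_v‖ of their common part equals the Manhattan distance d(p,q) = d_x(p,q) + d_y(p,q). (Lemma 3.1(1).) -/

import Mathlib

noncomputable section
open scoped Classical

/-- A point in the Euclidean plane. -/
abbrev Point : Type := ℝ × ℝ

/-- The Manhattan distance `d(p, q)`. -/
def manh (p q : Point) : ℝ := |p.1 - q.1| + |p.2 - q.2|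

/-- The Euclidean length `‖pq‖` of the segment between `p` and `q`. -/
def euclen (p q : Point) : ℝ := Real.sqrt ((p.1 - q.1) ^ 2 + (p.2 - q.2) ^ 2)

/-- The segment `pq` is axis-aligned. -/
def axisAligned (p q : Point) : Prop := p.1 = q.1 ∨ p.2 = q.2

/-- `z` lies in the bounding box `B(a, b)` (componentwise between `a ⊓ b` and `a ⊔ b`). -/
def inBox (a b z : Point) : Prop := a ⊓ b ≤ z ∧ z ≤ a ⊔ b

lemma euclen_comm (p q : Point) : euclen p q = euclen q p := by
  unfold euclen; ring_nf

/-- Length of an (unordered) edge. -/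
def sym2Len : Sym2 Point → ℝ := Sym2.lift ⟨euclen, euclen_comm⟩

/-- The length of a network, given by its (finite) edge set. -/
def netLength (N : Finset (Sym2 Point)) : ℝ := ∑ e ∈ N, sym2Len e

/-- A (simple) path in the plane, given by its sequence of (distinct) vertices. -/
structure GPath where
  k : ℕ
  pts : Fin (k + 1) → Point
  inj : Function.Injective pts

/-- The `i`-th edge of a path. -/
def GPath.edge (π : GPath) (i : Fin π.k) : Sym2 Point :=
  s(π.pts i.castSucc, π.pts i.succ)

/-- The edge set of a path. -/
def GPath.edges (π : GPath) : Finset (Sym2 Point) :=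
  Finset.image π.edge Finset.univ

/-- The total (Euclidean) length of a path. -/
def GPath.length (π : GPath) : ℝ :=
  ∑ i : Fin π.k, euclen (π.pts i.castSucc) (π.pts i.succ)

/-- `π` is a Manhattan path (M-path) for the pair `(s, t)`: an `s`–`t` path all of whose
edges are axis-aligned and whose total length equals the Manhattan distance `d(s, t)`. -/
def IsMPath (s t : Point) (π : GPath) : Prop :=
  π.pts 0 = s ∧ π.pts (Fin.last π.k) = t ∧
  (∀ i : Fin π.k, axisAligned (π.pts i.castSucc) (π.pts i.succ)) ∧
  π.length = manh s t

/-- A GMMN instance: a finite set of pairs of points. -/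
abbrev Inst : Type := Finset (Point × Point)

/-- The vertex set of the Hanan grid `H(P)`. -/
def hananV (P : Inst) : Finset Point :=
  ((P.image fun v => v.1.1) ∪ (P.image fun v => v.2.1)) ×ˢ
  ((P.image fun v => v.1.2) ∪ (P.image fun v => v.2.2))

/-- `{p, q}` is an edge of the Hanan grid `H(P)`: an axis-aligned segment between two distinct
grid vertices containing no third grid vertex. -/
def IsHananEdge (P : Inst) (p q : Point) : Prop :=
  p ∈ hananV P ∧ q ∈ hananV P ∧ p ≠ q ∧ axisAligned p q ∧
  ∀ z ∈ hananV P, inBox p q z → z = p ∨ z = q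

/-- All edges of the path `π` are edges of the Hanan grid `H(P)`. -/
def OnGrid (P : Inst) (π : GPath) : Prop :=
  ∀ i : Fin π.k, IsHananEdge P (π.pts i.castSucc) (π.pts i.succ)

/-- `π ∈ Π_P(u)`: an M-path for the pair `u` that is a subgraph of the Hanan grid `H(P)`. -/
def InPi (P : Inst) (u : Point × Point) (π : GPath) : Prop :=
  IsMPath u.1 u.2 π ∧ OnGrid P π

/-- The network `∪_{v ∈ P} π_v` determined by a choice of M-paths. -/
def netOf (P : Inst) (f : Point × Point → GPath) : Finset (Sym2 Point) :=
  P.biUnion fun v => (f v).edges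

/-- `f` gives a feasible solution in `Feas(P)`: an M-path on the Hanan grid for each pair. -/
def IsFeasChoice (P : Inst) (f : Point × Point → GPath) : Prop :=
  ∀ v ∈ P, InPi P v (f v)

/-- `f` gives an optimal solution in `Opt(P)`. -/
def IsOptChoice (P : Inst) (f : Point × Point → GPath) : Prop :=
  IsFeasChoice P f ∧
  ∀ g : Point × Point → GPath, IsFeasChoice P g →
    netLength (netOf P f) ≤ netLength (netOf P g)

/-- Adjacency in the intersection graph `IG[P]`: `u ≠ v` and the induced subgrids
`H(P, u)` and `H(P, v)` share an edge. -/
def IGAdj (P : Inst) (u v : Point × Point) : Prop :=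
  u ≠ v ∧ ∃ p q : Point, IsHananEdge P p q ∧
    inBox u.1 u.2 p ∧ inBox u.1 u.2 q ∧ inBox v.1 v.2 p ∧ inBox v.1 v.2 q

/-- The total length `‖π₁ ∩ π₂‖` of the segments shared by two paths. -/
def sharedLen (π₁ π₂ : GPath) : ℝ := netLength (π₁.edges ∩ π₂.edges)

/-- A pair `(p, q)` with `p_x ≤ q_x` is regular if `p_y ≤ q_y`. -/
def Regular (u : Point × Point) : Prop := u.1.1 ≤ u.2.1 ∧ u.1.2 ≤ u.2.2

/-- A pair `(p, q)` with `p_x ≤ q_x` is flipped if `p_y ≥ q_y`. -/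
def Flipped (u : Point × Point) : Prop := u.1.1 ≤ u.2.1 ∧ u.2.2 ≤ u.1.2

/-- The intersection graph `IG[P]` as a simple graph on the pairs of `P`. -/
def IG (P : Inst) : SimpleGraph {v : Point × Point // v ∈ P} where
  Adj u v := IGAdj P u.1 v.1
  symm := by
    constructor
    rintro u v ⟨hne, p, q, he, h1, h2, h3, h4⟩
    exact ⟨hne.symm, p, q, he, h3, h4, h1, h2⟩
  loopless := by
    constructor
    intro u h
    exact h.1 rfl


/-!
An M-path for `(p, q)` has length `d(p, q)`, so it shares at most that much with any other path.
Conversely, as `l` is regular and `l.1 ≤ p ≤ q ≤ l.2`, a monotone staircase on the Hanan grid from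
`l.1` to `l.2` can be routed through `p` and `q`: each of the three legs is built greedily, always
stepping to the next grid line to the right, or upwards once the right column is reached. The
part of this staircase between `p` and `q` is an M-path for `(p, q)` all of whose edges are shared.
-/

lemma List.IsChain.nodup_of_lt {α : Type*} [Preorder α] {L : List α}
    (hc : L.IsChain (· < ·)) : L.Nodup :=
  hc.pairwise.imp ne_of_lt

lemma sym2Len_nonneg (e : Sym2 Point) : 0 ≤ sym2Len e := by
  induction e using Sym2.ind with
  | _ a b => exact Real.sqrt_nonneg _

lemma euclen_eq_of_axisAligned_of_le {z w : Point} (hzw : axisAligned z w) (hle : z ≤ w) :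
    euclen z w = (w.1 - z.1) + (w.2 - z.2) := by
  rcases hzw with h | h
  · have hsq : (z.1 - w.1) ^ 2 + (z.2 - w.2) ^ 2 = (w.2 - z.2) ^ 2 := by rw [h]; ring
    rw [euclen, hsq, Real.sqrt_sq (sub_nonneg.2 hle.2), h, sub_self, zero_add]
  · have hsq : (z.1 - w.1) ^ 2 + (z.2 - w.2) ^ 2 = (w.1 - z.1) ^ 2 := by rw [h]; ring
    rw [euclen, hsq, Real.sqrt_sq (sub_nonneg.2 hle.1), h, sub_self, add_zero]

lemma manh_eq_of_le {s t : Point} (h : s ≤ t) : manh s t = (t.1 - s.1) + (t.2 - s.2) := by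
  rw [manh, abs_sub_comm, abs_of_nonneg (sub_nonneg.2 h.1), abs_sub_comm,
    abs_of_nonneg (sub_nonneg.2 h.2)]

namespace GPath

lemma edge_injective (π : GPath) : Function.Injective π.edge := by
  intro i j hij
  rcases Sym2.eq_iff.1 hij with ⟨h, -⟩ | ⟨h₁, h₂⟩
  · exact Fin.castSucc_injective _ (π.inj h)
  · have h₁ := congrArg Fin.val (π.inj h₁)
    have h₂ := congrArg Fin.val (π.inj h₂)
    simp only [Fin.val_castSucc, Fin.val_succ] at h₁ h₂
    omega

lemma netLength_edges (π : GPath) : netLength π.edges = π.length := by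
  rw [netLength, edges, Finset.sum_image fun i _ j _ h => π.edge_injective h]
  rfl

def ofList (L : List Point) (hL : L ≠ []) (hnd : L.Nodup) : GPath where
  k := L.length - 1
  pts i := L[(i : ℕ)]'(by have := List.length_pos_iff.2 hL; omega)
  inj _ _ h := Fin.ext ((hnd.getElem_inj_iff).1 h)

lemma succ_lt_length_of_ofList {L : List Point} {hL : L ≠ []} {hnd : L.Nodup}
    (i : Fin (ofList L hL hnd).k) : (i : ℕ) + 1 < L.length := by
  have := i.isLt
  change _ < L.length - 1 at this
  omega

lemma mem_edges_ofList {L : List Point} (hL : L ≠ []) (hnd : L.Nodup) {e : Sym2 Point} :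
    e ∈ (ofList L hL hnd).edges ↔ ∃ (i : ℕ) (hi : i + 1 < L.length), e = s(L[i], L[i + 1]) := by
  simp only [edges, Finset.mem_image, Finset.mem_univ, true_and]
  constructor
  · rintro ⟨i, rfl⟩
    exact ⟨i, succ_lt_length_of_ofList i, rfl⟩
  · rintro ⟨i, hi, rfl⟩
    exact ⟨⟨i, by change _ < L.length - 1; omega⟩, rfl⟩

lemma edges_ofList_subset {M L : List Point} (hM : M ≠ []) (hMnd : M.Nodup) (hL : L ≠ [])
    (hLnd : L.Nodup) (h : M <:+: L) : (ofList M hM hMnd).edges ⊆ (ofList L hL hLnd).edges := by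
  obtain ⟨u, t, rfl⟩ := h
  intro e he
  obtain ⟨i, hi, rfl⟩ := (mem_edges_ofList hM hMnd).1 he
  have hshift : ∀ (j : ℕ) (hj : j < M.length),
      (u ++ M ++ t)[u.length + j]'(by simp only [List.length_append]; omega) = M[j] := by
    intro j hj
    simp [List.getElem_append_left, List.getElem_append_right, hj]
  refine (mem_edges_ofList hL hLnd).2 ⟨u.length + i, by simp only [List.length_append]; omega, ?_⟩
  rw [hshift i (by omega), ← hshift (i + 1) hi]
  rfl

lemma length_ofList {L : List Point} (hL : L ≠ []) (hnd : L.Nodup)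
    (hc : L.IsChain fun z w => axisAligned z w ∧ z ≤ w) {s t : Point}
    (hs : L.head? = some s) (ht : L.getLast? = some t) :
    (ofList L hL hnd).length = (t.1 + t.2) - (s.1 + s.2) := by
  set F : ℕ → ℝ := fun j => (L[j]?.getD 0).1 + (L[j]?.getD 0).2
  have hstep : ∀ i : Fin (L.length - 1), euclen ((ofList L hL hnd).pts i.castSucc)
      ((ofList L hL hnd).pts i.succ) = F (i + 1) - F i := by
    intro i
    have hi : (i : ℕ) + 1 < L.length := by omega
    obtain ⟨hal, hle⟩ := hc.getElem i hi
    simp only [ofList, Fin.val_castSucc, Fin.val_succ, F, List.getElem?_eq_getElem hi,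
      List.getElem?_eq_getElem (Nat.lt_of_succ_lt hi), Option.getD_some]
    rw [euclen_eq_of_axisAligned_of_le hal hle]
    ring
  have hF0 : F 0 = s.1 + s.2 := by simp only [F, ← List.head?_eq_getElem?, hs, Option.getD_some]
  have hFn : F (L.length - 1) = t.1 + t.2 := by
    simp only [F, ← List.getLast?_eq_getElem?, ht, Option.getD_some]
  refine (Fintype.sum_congr _ (fun i : Fin (L.length - 1) => F (i + 1) - F i) hstep).trans ?_
  rw [Fin.sum_univ_eq_sum_range (fun i => F (i + 1) - F i), Finset.sum_range_sub, hFn, hF0]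

lemma isMPath_ofList {L : List Point} (hL : L ≠ []) (hnd : L.Nodup)
    (hc : L.IsChain fun z w => axisAligned z w ∧ z ≤ w) {s t : Point}
    (hs : L.head? = some s) (ht : L.getLast? = some t) (hst : s ≤ t) :
    IsMPath s t (ofList L hL hnd) := by
  refine ⟨?_, ?_, fun i => (hc.getElem i (succ_lt_length_of_ofList i)).1, ?_⟩
  · rw [List.head?_eq_getElem?] at hs
    exact (List.getElem?_eq_some_iff.1 hs).2
  · rw [List.getLast?_eq_getElem?] at ht
    exact (List.getElem?_eq_some_iff.1 ht).2
  · rw [length_ofList hL hnd hc hs ht, manh_eq_of_le hst]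
    ring

end GPath

lemma sharedLen_le_length (π₁ π₂ : GPath) : sharedLen π₁ π₂ ≤ π₂.length := by
  rw [sharedLen, ← π₂.netLength_edges]
  exact Finset.sum_le_sum_of_subset_of_nonneg Finset.inter_subset_right
    fun e _ _ => sym2Len_nonneg e

lemma sharedLen_eq_length_of_subset {π₁ π₂ : GPath} (h : π₂.edges ⊆ π₁.edges) :
    sharedLen π₁ π₂ = π₂.length := by
  rw [sharedLen, Finset.inter_eq_right.2 h, π₂.netLength_edges]

lemma inBox_iff_of_le {a b z : Point} (hab : a ≤ b) : inBox a b z ↔ a ≤ z ∧ z ≤ b := by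
  rw [inBox, inf_eq_left.2 hab, sup_eq_right.2 hab]

lemma fst_mem_hananV {P : Inst} {v : Point × Point} (hv : v ∈ P) : v.1 ∈ hananV P :=
  Finset.mem_product.2 ⟨Finset.mem_union_left _ (Finset.mem_image_of_mem _ hv),
    Finset.mem_union_left _ (Finset.mem_image_of_mem _ hv)⟩

lemma snd_mem_hananV {P : Inst} {v : Point × Point} (hv : v ∈ P) : v.2 ∈ hananV P :=
  Finset.mem_product.2 ⟨Finset.mem_union_right _ (Finset.mem_image_of_mem _ hv),
    Finset.mem_union_right _ (Finset.mem_image_of_mem _ hv)⟩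

lemma Finset.exists_least_gt {α : Type*} [LinearOrder α] {S : Finset α} {x y : α} (hy : y ∈ S)
    (hxy : x < y) : ∃ x' ∈ S, x < x' ∧ x' ≤ y ∧ ∀ z ∈ S, x < z → x' ≤ z := by
  obtain ⟨x', hx', hmin⟩ := (S.filter (x < ·)).exists_min_image id
    ⟨y, Finset.mem_filter.2 ⟨hy, hxy⟩⟩
  rw [Finset.mem_filter] at hx'
  exact ⟨x', hx'.1, hx'.2, hmin y (Finset.mem_filter.2 ⟨hy, hxy⟩),
    fun z hz hxz => hmin z (Finset.mem_filter.2 ⟨hz, hxz⟩)⟩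

def GridStep (P : Inst) (z w : Point) : Prop := IsHananEdge P z w ∧ z ≤ w

lemma GridStep.lt {P : Inst} {z w : Point} (h : GridStep P z w) : z < w :=
  lt_of_le_of_ne h.2 h.1.2.2.1

lemma GridStep.axisAligned_le {P : Inst} {z w : Point} (h : GridStep P z w) :
    axisAligned z w ∧ z ≤ w :=
  ⟨h.1.2.2.2.1, h.2⟩

lemma exists_gridStep_of_lt {P : Inst} {a b : Point} (ha : a ∈ hananV P) (hb : b ∈ hananV P)
    (hab : a < b) : ∃ c ∈ hananV P, GridStep P a c ∧ c ≤ b := by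
  obtain ⟨⟨hax, hay⟩, hba⟩ := hab
  rw [hananV, Finset.mem_product] at ha hb
  rcases hax.lt_or_eq with hx | hx
  · obtain ⟨x, hxS, hax', hxb, hmin⟩ := Finset.exists_least_gt hb.1 hx
    have hac : a ≤ (x, a.2) := ⟨hax'.le, le_rfl⟩
    refine ⟨(x, a.2), Finset.mem_product.2 ⟨hxS, ha.2⟩, ⟨⟨Finset.mem_product.2 ha,
      Finset.mem_product.2 ⟨hxS, ha.2⟩, fun h => hax'.ne (congrArg Prod.fst h), Or.inr rfl,
      fun z hz hbox => ?_⟩, hac⟩, hxb, hay⟩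
    obtain ⟨⟨hz₁, hz₂⟩, hz₁', hz₂'⟩ := (inBox_iff_of_le hac).1 hbox
    rcases hz₁.lt_or_eq with h | h
    · exact Or.inr (Prod.ext (le_antisymm hz₁' (hmin _ (Finset.mem_product.1 hz).1 h))
        (le_antisymm hz₂' hz₂))
    · exact Or.inl (Prod.ext h.symm (le_antisymm hz₂' hz₂))
  · have hy : a.2 < b.2 := hay.lt_of_not_ge fun h => hba ⟨hx.ge, h⟩
    obtain ⟨y, hyS, hay', hyb, hmin⟩ := Finset.exists_least_gt hb.2 hy
    have hac : a ≤ (a.1, y) := ⟨le_rfl, hay'.le⟩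
    refine ⟨(a.1, y), Finset.mem_product.2 ⟨ha.1, hyS⟩, ⟨⟨Finset.mem_product.2 ha,
      Finset.mem_product.2 ⟨ha.1, hyS⟩, fun h => hay'.ne (congrArg Prod.snd h), Or.inl rfl,
      fun z hz hbox => ?_⟩, hac⟩, hax, hyb⟩
    obtain ⟨⟨hz₁, hz₂⟩, hz₁', hz₂'⟩ := (inBox_iff_of_le hac).1 hbox
    rcases hz₂.lt_or_eq with h | h
    · exact Or.inr (Prod.ext (le_antisymm hz₁' hz₁)
        (le_antisymm hz₂' (hmin _ (Finset.mem_product.1 hz).2 h)))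
    · exact Or.inl (Prod.ext (le_antisymm hz₁' hz₁) h.symm)

/-- The prefix `m` does not depend on `r`; this is what lets the same piece from `p` to `q` sit
inside a longer chain. -/
theorem exists_gridStep_prefix (P : Inst) {a b : Point} (ha : a ∈ hananV P)
    (hb : b ∈ hananV P) (hab : a ≤ b) :
    ∃ m : List Point, ∀ r : List Point, r.IsChain (GridStep P) → r.head? = some b →
      (m ++ r).IsChain (GridStep P) ∧ (m ++ r).head? = some a := by
  rcases hab.lt_or_eq with hlt | rfl
  · obtain ⟨c, hc, hac, hcb⟩ := exists_gridStep_of_lt ha hb hlt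
    obtain ⟨m, hm⟩ := exists_gridStep_prefix P hc hb hcb
    refine ⟨a :: m, fun r hr hrb => ?_⟩
    obtain ⟨hmr, hmrc⟩ := hm r hr hrb
    exact ⟨hmr.cons (by simpa [hmrc] using hac), rfl⟩
  · exact ⟨[], fun r hr hrb => ⟨hr, hrb⟩⟩
termination_by ((hananV P).filter fun z => a ≤ z ∧ z ≤ b).card
decreasing_by
  refine Finset.card_lt_card (Finset.ssubset_iff_of_subset ?_ |>.2 ⟨a, ?_, ?_⟩)
  · intro z hz
    rw [Finset.mem_filter] at hz ⊢
    exact ⟨hz.1, hac.2.trans hz.2.1, hz.2.2⟩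
  · exact Finset.mem_filter.2 ⟨ha, le_rfl, hlt.le⟩
  · exact fun h => hac.lt.not_ge (Finset.mem_filter.1 h).2.1

lemma inPi_ofList {P : Inst} {L : List Point} (hL : L ≠ []) (hc : L.IsChain (GridStep P))
    {s t : Point} (hs : L.head? = some s) (ht : L.getLast? = some t) (hst : s ≤ t) :
    InPi P (s, t) (GPath.ofList L hL (hc.imp fun _ _ h => h.lt).nodup_of_lt) :=
  ⟨GPath.isMPath_ofList hL _ (hc.imp fun _ _ h => h.axisAligned_le) hs ht hst,
    fun i => (hc.getElem i (GPath.succ_lt_length_of_ofList i)).1⟩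

theorem exists_inPi_edges_subset {P : Inst} {a p q b : Point} (ha : a ∈ hananV P)
    (hp : p ∈ hananV P) (hq : q ∈ hananV P) (hb : b ∈ hananV P) (hap : a ≤ p) (hpq : p ≤ q)
    (hqb : q ≤ b) :
    ∃ π σ : GPath, InPi P (a, b) π ∧ InPi P (p, q) σ ∧ σ.edges ⊆ π.edges := by
  obtain ⟨m₁, h₁⟩ := exists_gridStep_prefix P ha hp hap
  obtain ⟨m₂, h₂⟩ := exists_gridStep_prefix P hp hq hpq
  obtain ⟨m₃, h₃⟩ := exists_gridStep_prefix P hq hb hqb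
  obtain ⟨c₃, e₃⟩ := h₃ [b] (List.isChain_singleton b) rfl
  obtain ⟨c₂, e₂⟩ := h₂ _ c₃ e₃
  obtain ⟨c₁, e₁⟩ := h₁ _ c₂ e₂
  obtain ⟨cσ, eσ⟩ := h₂ [q] (List.isChain_singleton q) rfl
  obtain ⟨t, ht⟩ := List.head?_eq_some_iff.1 e₃
  have hinfix : m₂ ++ [q] <:+: m₁ ++ (m₂ ++ (m₃ ++ [b])) := ⟨m₁, t, by simp [ht]⟩
  exact ⟨_, _, inPi_ofList (by simp) c₁ e₁ (by simp) (hap.trans (hpq.trans hqb)),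
    inPi_ofList (by simp) cσ eσ (by simp) hpq, GPath.edges_ofList_subset _ _ _ _ hinfix⟩

/-- Lemma 3.1(1): for a regular pair `l ∈ P` and Hanan-grid vertices `p ≤ q` in `B(l)`,
the maximum length of segments shared by an M-path for `l` and an M-path for `(p, q)`
equals the Manhattan distance `d(p, q)`. -/
theorem sharable_length_regular (P : Inst) (l : Point × Point) (hl : l ∈ P)
    (hreg : Regular l) (p q : Point)
    (hp : p ∈ hananV P) (hq : q ∈ hananV P)
    (hpB : inBox l.1 l.2 p) (hqB : inBox l.1 l.2 q) (hpq : p ≤ q) :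
    IsGreatest {x : ℝ | ∃ πl πv : GPath, InPi P l πl ∧ InPi P (p, q) πv ∧
      x = sharedLen πl πv} (manh p q) := by
  have hl₁₂ : l.1 ≤ l.2 := hreg
  refine ⟨?_, ?_⟩
  · obtain ⟨πl, πv, hπl, hπv, hsub⟩ := exists_inPi_edges_subset (fst_mem_hananV hl) hp hq
      (snd_mem_hananV hl) ((inBox_iff_of_le hl₁₂).1 hpB).1 hpq ((inBox_iff_of_le hl₁₂).1 hqB).2
    exact ⟨πl, πv, hπl, hπv, by rw [sharedLen_eq_length_of_subset hsub, hπv.1.2.2.2]⟩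
  · rintro _ ⟨πl, πv, -, hπv, rfl⟩
    exact (sharedLen_le_length πl πv).trans_eq hπv.1.2.2.2
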